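/- Let C be the set of multisets of cardinality at most 2 over Fin 2, and let R ⊆ C × C be the set of non-flow irreversible reactions on 2 species, i.e. ordered pairs (s, t) with s ≠ t excluding the four pairs in which one of s, t is the empty multiset and the other a singleton (so |R| = 6·5 − 4 = 26). The symmetric group on Fin 2 acts on R by relabelling species (acting on each multiset elementwise). Then the number of orbits of this action on R equals 14. -/

import Mathlib

/-- The set of non-flow irreversible at most bimolecular reactions on 2 species:
ordered pairs of distinct multisets of cardinality at most 2 over `Fin 2`,
excluding the four flow reactions. -/
def R17 : Set (Multiset (Fin 2) × Multiset (Fin 2)) :=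
  {p | Multiset.card p.1 ≤ 2 ∧ Multiset.card p.2 ≤ 2 ∧ p.1 ≠ p.2 ∧
       ¬((p.1 = 0 ∧ Multiset.card p.2 = 1) ∨ (Multiset.card p.1 = 1 ∧ p.2 = 0))}

/-- The orbit of a reaction under the relabelling action of the symmetric group on
the two species. -/
def orbit17 (p : Multiset (Fin 2) × Multiset (Fin 2)) :
    Set (Multiset (Fin 2) × Multiset (Fin 2)) :=
  {q | ∃ σ : Equiv.Perm (Fin 2),
        q.1 = Multiset.map σ p.1 ∧ q.2 = Multiset.map σ p.2}

/-! A multiset of cardinality at most `n` over a finite type lies below `n • univ`, so the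
reactions form an explicit finset of pairs of sub-multisets of `{0, 0, 1, 1}`, and the orbit
of a reaction is the image of the finite group `Perm (Fin 2)`. Both counts are then finite
computations. -/

open Finset

section

variable {α : Type*} [DecidableEq α] [Fintype α]

def multisetsCardLE (α : Type*) [DecidableEq α] [Fintype α] (n : ℕ) : Finset (Multiset α) :=
  (n • (univ : Finset α).val).powerset.toFinset.filter (Multiset.card · ≤ n)

theorem mem_multisetsCardLE {n : ℕ} {m : Multiset α} :
    m ∈ multisetsCardLE α n ↔ Multiset.card m ≤ n := by
  simp only [multisetsCardLE, mem_filter, Multiset.mem_toFinset, Multiset.mem_powerset,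
    and_iff_right_iff_imp, Multiset.le_iff_count]
  intro h a
  simpa using (Multiset.count_le_card a m).trans h

def orbitFinset (p : Multiset α × Multiset α) : Finset (Multiset α × Multiset α) :=
  univ.image fun σ : Equiv.Perm α => (p.1.map σ, p.2.map σ)

end

def nonFlowReactions : Finset (Multiset (Fin 2) × Multiset (Fin 2)) :=
  (multisetsCardLE (Fin 2) 2 ×ˢ multisetsCardLE (Fin 2) 2).filter fun p => p.1 ≠ p.2 ∧
    ¬((p.1 = 0 ∧ Multiset.card p.2 = 1) ∨ (Multiset.card p.1 = 1 ∧ p.2 = 0))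

theorem R17_eq_coe_nonFlowReactions : R17 = nonFlowReactions := by
  ext p
  simp [R17, nonFlowReactions, mem_multisetsCardLE, and_assoc]

theorem orbit17_eq_coe_orbitFinset (p : Multiset (Fin 2) × Multiset (Fin 2)) :
    orbit17 p = orbitFinset p := by
  ext q
  simp [orbit17, orbitFinset, Prod.ext_iff, eq_comm]

theorem ncard_image_orbit17 (s : Finset (Multiset (Fin 2) × Multiset (Fin 2))) :
    (orbit17 '' s).ncard = (s.image orbitFinset).card := by
  have horbit : orbit17 = (↑) ∘ orbitFinset := funext orbit17_eq_coe_orbitFinset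
  rw [horbit, Set.image_comp, ← coe_image, Set.ncard_image_of_injective _ coe_injective,
    Set.ncard_coe_finset]

theorem stmt_17 : R17.ncard = 26 ∧ (orbit17 '' R17).ncard = 14 := by
  rw [R17_eq_coe_nonFlowReactions, Set.ncard_coe_finset, ncard_image_orbit17]
  decide
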